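/- The pigeonhole CNF formula PHP(n,m) is satisfiable (i.e. there exists a model M with M ⊨ PHP(n,m)) if and only if n ≤ m, for all n, m ≥ 1. -/
import Mathlib


/-- A literal: a propositional variable (ℕ) with a sign. -/
structure Lit where
  var : ℕ
  sign : Bool
deriving DecidableEq

/-- The opposite literal. -/
def Lit.neg (l : Lit) : Lit := ⟨l.var, !l.sign⟩

/-- A clause: a finite set of literals, read disjunctively. -/
abbrev Clause := Finset Lit

/-- A CNF formula: a finite set of clauses, read conjunctively. -/
abbrev CNF := Finset Clause

/-- A valuation: a finite set of literals, read conjunctively. -/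
abbrev Valu := Finset Lit

/-- A model: a boolean assignment to literals respecting negation. -/
def IsModel (M : Lit → Bool) : Prop := ∀ l : Lit, M l = true ↔ ¬ (M (Lit.neg l) = true)

/-- `M ⊨ Γ` for a valuation (set of literals) `Γ`. -/
def SatVal (M : Lit → Bool) (Γ : Valu) : Prop := ∀ l ∈ Γ, M l = true

/-- `M ⊨ Δ` for a CNF formula `Δ`. -/
def SatCNF (M : Lit → Bool) (Δ : CNF) : Prop := ∀ C ∈ Δ, ∃ l ∈ C, M l = true

/-- A consistent valuation. -/
def Consistent (Γ : Valu) : Prop := ∀ l ∈ Γ, Lit.neg l ∉ Γ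

/-- The DPLL derivability relation `Γ ⊢ Δ`. -/
inductive DPLL : Valu → CNF → Prop
  | conflict (Γ : Valu) (Δ : CNF) : (∅ : Clause) ∈ Δ → DPLL Γ Δ
  | unit (Γ : Valu) (Δ : CNF) (l : Lit) : ({l} : Clause) ∈ Δ →
      DPLL (insert l Γ) (Δ.erase {l}) → DPLL Γ Δ
  | elim (Γ : Valu) (Δ : CNF) (C : Clause) (l : Lit) : l ∈ Γ → l ∈ C → C ∈ Δ →
      DPLL Γ (Δ.erase C) → DPLL Γ Δ
  | red (Γ : Valu) (Δ : CNF) (C : Clause) (l : Lit) : l ∈ Γ → Lit.neg l ∈ C → C ∈ Δ →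
      DPLL Γ (insert (C.erase (Lit.neg l)) (Δ.erase C)) → DPLL Γ Δ
  | split (Γ : Valu) (Δ : CNF) (l : Lit) :
      DPLL (insert l Γ) Δ → DPLL (insert (Lit.neg l) Γ) Δ → DPLL Γ Δ

/-- The sized DPLL derivability relation `Γ ⊢ⁿ Δ`. -/
inductive DPLLn : Valu → ℕ → CNF → Prop
  | conflict (Γ : Valu) (Δ : CNF) : (∅ : Clause) ∈ Δ → DPLLn Γ 0 Δ
  | unit (Γ : Valu) (Δ : CNF) (l : Lit) (n : ℕ) : ({l} : Clause) ∈ Δ →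
      DPLLn (insert l Γ) n (Δ.erase {l}) → DPLLn Γ (n + 1) Δ
  | elim (Γ : Valu) (Δ : CNF) (C : Clause) (l : Lit) (n : ℕ) : l ∈ Γ → l ∈ C → C ∈ Δ →
      DPLLn Γ n (Δ.erase C) → DPLLn Γ (n + 1) Δ
  | red (Γ : Valu) (Δ : CNF) (C : Clause) (l : Lit) (n : ℕ) : l ∈ Γ → Lit.neg l ∈ C → C ∈ Δ →
      DPLLn Γ n (insert (C.erase (Lit.neg l)) (Δ.erase C)) → DPLLn Γ (n + 1) Δ
  | split (Γ : Valu) (Δ : CNF) (l : Lit) (n m : ℕ) :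
      DPLLn (insert l Γ) n Δ → DPLLn (insert (Lit.neg l) Γ) m Δ → DPLLn Γ (n + m + 1) Δ

/-- The sized resolution derivability relation `Δ ⊢ᵣⁿ C`. -/
inductive Res : CNF → ℕ → Clause → Prop
  | sub (Δ : CNF) (C₀ C : Clause) : C₀ ∈ Δ → C₀ ⊆ C → Res Δ 0 C
  | res (Δ : CNF) (C C' : Clause) (l : Lit) (n m : ℕ) :
      Res Δ n (insert l C) → Res Δ m (insert (Lit.neg l) C') → Res Δ (n + m + 1) (C ∪ C')

/-- The variable `v_{i,k}`, via the injective pairing function. -/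
def phpVar (i k : ℕ) : ℕ := Nat.pair i k

/-- The positive literal `l_{i,k}`. -/
def phpLit (i k : ℕ) : Lit := ⟨phpVar i k, true⟩

/-- The clause `{l_{i,1}, …, l_{i,m}}` : pigeon `i` sits in some hole. -/
def pigeonClause (i m : ℕ) : Clause := (Finset.Icc 1 m).image (fun k => phpLit i k)

/-- The pigeonhole formula PHP(n,m). -/
def PHP (n m : ℕ) : CNF :=
  ((Finset.Icc 1 n).image (fun i => pigeonClause i m)) ∪
  ((((Finset.Icc 1 n) ×ˢ (Finset.Icc 1 n)) ×ˢ (Finset.Icc 1 m)).filter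
      (fun p => p.1.1 < p.1.2)).image
    (fun p => ({(phpLit p.1.1 p.2).neg, (phpLit p.1.2 p.2).neg} : Clause))


section Aux

lemma holeClause_mem (n m i j k : ℕ) (hi : i ∈ Finset.Icc 1 n) (hj : j ∈ Finset.Icc 1 n)
    (hk : k ∈ Finset.Icc 1 m) (hij : i < j) :
    ({(phpLit i k).neg, (phpLit j k).neg} : Clause) ∈ PHP n m := by
  unfold PHP
  rw [Finset.mem_union]
  right
  refine Finset.mem_image.mpr ⟨((i, j), k), ?_, rfl⟩
  simp [Finset.mem_filter, Finset.mem_product, hi, hj, hk, hij]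

lemma phpLit_inj {i k i' k' : ℕ} (h : phpLit i k = phpLit i' k') : i = i' ∧ k = k' := by
  have : Nat.pair i k = Nat.pair i' k' := congrArg Lit.var h
  have h1 := congrArg (fun x => (Nat.unpair x).1) this
  have h2 := congrArg (fun x => (Nat.unpair x).2) this
  simp [Nat.unpair_pair] at h1 h2
  exact ⟨h1, h2⟩

lemma no_double {M : Lit → Bool} (hM : IsModel M) (hsat : SatCNF M (PHP n m))
    {i j k : ℕ} (hi : i ∈ Finset.Icc 1 n) (hj : j ∈ Finset.Icc 1 n)
    (hk : k ∈ Finset.Icc 1 m) (hij : i < j)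
    (h1 : M (phpLit i k) = true) (h2 : M (phpLit j k) = true) : False := by
  obtain ⟨l, hl, hlt⟩ := hsat _ (holeClause_mem n m i j k hi hj hk hij)
  have hni : M ((phpLit i k).neg) = false := by
    have := (hM (phpLit i k)).mp h1
    simpa using this
  have hnj : M ((phpLit j k).neg) = false := by
    have := (hM (phpLit j k)).mp h2
    simpa using this
  rcases Finset.mem_insert.mp hl with h | h
  · rw [h, hni] at hlt; exact absurd hlt (by simp)
  · rw [Finset.mem_singleton.mp h, hnj] at hlt; exact absurd hlt (by simp)

end Aux

/-- PHP(n,m) is satisfiable iff n ≤ m, for n, m ≥ 1. -/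
theorem php_sat_iff (n m : ℕ) (hn : 1 ≤ n) (hm : 1 ≤ m) :
    (∃ M : Lit → Bool, IsModel M ∧ SatCNF M (PHP n m)) ↔ n ≤ m := by
  constructor
  · rintro ⟨M, hM, hsat⟩
    classical
    have hpick : ∀ i ∈ Finset.Icc 1 n, ∃ k, k ∈ Finset.Icc 1 m ∧ M (phpLit i k) = true := by
      intro i hi
      have hcl : pigeonClause i m ∈ PHP n m := by
        unfold PHP
        exact Finset.mem_union_left _ (Finset.mem_image.mpr ⟨i, hi, rfl⟩)
      obtain ⟨l, hl, hlt⟩ := hsat _ hcl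
      obtain ⟨k, hk, rfl⟩ := Finset.mem_image.mp hl
      exact ⟨k, hk, hlt⟩
    set g : ℕ → ℕ := fun i => if h : i ∈ Finset.Icc 1 n then (hpick i h).choose else 0 with hg
    have hgmem : ∀ i ∈ Finset.Icc 1 n, g i ∈ Finset.Icc 1 m := by
      intro i hi; simp only [hg, dif_pos hi]; exact (hpick i hi).choose_spec.1
    have hgtrue : ∀ i (hi : i ∈ Finset.Icc 1 n), M (phpLit i (g i)) = true := by
      intro i hi; simp only [hg, dif_pos hi]; exact (hpick i hi).choose_spec.2
    have hinj : Set.InjOn g (Finset.Icc 1 n) := by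
      intro i hi j hj hgij
      by_contra hne
      rcases Nat.lt_or_ge i j with hlt | hge
      · exact no_double hM hsat hi hj (hgmem i hi) hlt (hgtrue i hi)
          (hgij ▸ hgtrue j hj)
      · have hlt : j < i := lt_of_le_of_ne hge (Ne.symm hne)
        exact no_double hM hsat hj hi (hgmem j hj) hlt (hgtrue j hj)
          (hgij ▸ hgtrue i hi)
    have := Finset.card_le_card_of_injOn g hgmem hinj
    simpa [Nat.card_Icc] using this
  · intro hnm
    refine ⟨fun l => (decide ((Nat.unpair l.var).1 = (Nat.unpair l.var).2)) == l.sign,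
      ?_, ?_⟩
    · intro l
      cases h : decide ((Nat.unpair l.var).1 = (Nat.unpair l.var).2) <;>
        cases hs : l.sign <;> simp [Lit.neg, h, hs]
    · intro C hC
      unfold PHP at hC
      rcases Finset.mem_union.mp hC with h | h
      · obtain ⟨i, hi, rfl⟩ := Finset.mem_image.mp h
        rw [Finset.mem_Icc] at hi
        refine ⟨phpLit i i, Finset.mem_image.mpr ⟨i, Finset.mem_Icc.mpr
          ⟨hi.1, le_trans hi.2 hnm⟩, rfl⟩, ?_⟩
        simp [phpLit, phpVar, Nat.unpair_pair]
      · obtain ⟨⟨⟨i, j⟩, k⟩, hp, rfl⟩ := Finset.mem_image.mp h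
        rw [Finset.mem_filter] at hp
        have hij : i ≠ j := Nat.ne_of_lt hp.2
        by_cases hik : i = k
        · refine ⟨(phpLit j k).neg, by simp, ?_⟩
          simp only [phpLit, phpVar, Lit.neg, Nat.unpair_pair, decide_eq_true_eq]
          simp only [Bool.not_true, beq_iff_eq, Bool.false_eq_true, decide_eq_false_iff_not]
          omega
        · refine ⟨(phpLit i k).neg, by simp, ?_⟩
          simp [phpLit, phpVar, Lit.neg, Nat.unpair_pair, hik]
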